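/- Let G be the graph consisting of a triangle u v w, together with vertices a, b adjacent to u and v, and vertices c, d adjacent to v and w. Then G contains no K_4-minor rooted at a, b, c, d. -/

import Mathlib

/-
Four disjoint branch sets cannot all meet the triangle `{0, 1, 2}`, so one of them avoids it and
hence consists of its root alone. That root has only two neighbours, yet the three other, disjoint,
branch sets must each contain one of them.
-/

open SimpleGraph

variable {V : Type*}

/-- Branch-set definition of an `H`-minor in `G`. -/
def HasGraphMinor {W : Type*} (G : SimpleGraph V) (H : SimpleGraph W) : Prop :=
  ∃ B : W → Set V,
    (∀ w, (B w).Nonempty) ∧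
    (∀ w, (G.induce (B w)).Connected) ∧
    (Pairwise fun w w' => Disjoint (B w) (B w')) ∧
    ∀ ⦃w w'⦄, H.Adj w w' → ∃ x ∈ B w, ∃ y ∈ B w', G.Adj x y

/-- `A,B,C,D` are the branch sets of a `K₄`-minor rooted at `a,b,c,d`. -/
def RootedK4MinorOn (G : SimpleGraph V) (a b c d : V) (A B C D : Set V) : Prop :=
    a ∈ A ∧ b ∈ B ∧ c ∈ C ∧ d ∈ D ∧
    (G.induce A).Connected ∧ (G.induce B).Connected ∧
    (G.induce C).Connected ∧ (G.induce D).Connected ∧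
    Disjoint A B ∧ Disjoint A C ∧ Disjoint A D ∧
    Disjoint B C ∧ Disjoint B D ∧ Disjoint C D ∧
    (∃ x ∈ A, ∃ y ∈ B, G.Adj x y) ∧ (∃ x ∈ A, ∃ y ∈ C, G.Adj x y) ∧
    (∃ x ∈ A, ∃ y ∈ D, G.Adj x y) ∧ (∃ x ∈ B, ∃ y ∈ C, G.Adj x y) ∧
    (∃ x ∈ B, ∃ y ∈ D, G.Adj x y) ∧ (∃ x ∈ C, ∃ y ∈ D, G.Adj x y)

/-- A `K₄`-minor rooted at `a,b,c,d`. -/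
def RootedK4Minor (G : SimpleGraph V) (a b c d : V) : Prop :=
  ∃ A B C D : Set V, RootedK4MinorOn G a b c d A B C D

/-- A `K₃`-minor rooted at `a,b,c`. -/
def RootedK3Minor (G : SimpleGraph V) (a b c : V) : Prop :=
  ∃ A B C : Set V,
    a ∈ A ∧ b ∈ B ∧ c ∈ C ∧
    (G.induce A).Connected ∧ (G.induce B).Connected ∧ (G.induce C).Connected ∧
    Disjoint A B ∧ Disjoint A C ∧ Disjoint B C ∧
    (∃ x ∈ A, ∃ y ∈ B, G.Adj x y) ∧ (∃ x ∈ A, ∃ y ∈ C, G.Adj x y) ∧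
    (∃ x ∈ B, ∃ y ∈ C, G.Adj x y)

/-- Add a new apex vertex adjacent to every vertex of `s`. -/
def Apex (G : SimpleGraph V) (s : Set V) : SimpleGraph (Option V) where
  Adj x y :=
    (∃ u v, x = some u ∧ y = some v ∧ G.Adj u v) ∨
    (∃ u, x = some u ∧ y = none ∧ u ∈ s) ∨
    (∃ v, x = none ∧ y = some v ∧ v ∈ s)
  symm := by
    constructor
    rintro x y (⟨u, v, rfl, rfl, h⟩ | ⟨u, rfl, rfl, h⟩ | ⟨v, rfl, rfl, h⟩)
    · exact Or.inl ⟨v, u, rfl, rfl, h.symm⟩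
    · exact Or.inr (Or.inr ⟨u, rfl, rfl, h⟩)
    · exact Or.inr (Or.inl ⟨v, rfl, rfl, h⟩)
  loopless := by
    constructor
    rintro x (⟨u, v, rfl, h, hadj⟩ | ⟨u, rfl, h, _⟩ | ⟨v, h, rfl, _⟩)
    · rw [Option.some_inj] at h; subst h; exact hadj.ne rfl
    · exact Option.some_ne_none _ h
    · exact Option.some_ne_none _ h

/-- Planarity, via Wagner's theorem: no `K₅`-minor and no `K₃,₃`-minor. -/
def IsPlanar (G : SimpleGraph V) : Prop :=
  ¬ HasGraphMinor G (⊤ : SimpleGraph (Fin 5)) ∧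
  ¬ HasGraphMinor G (completeBipartiteGraph (Fin 3) (Fin 3))

/-- `G` is `k`-connected: more than `k` vertices, and deleting fewer than `k`
vertices leaves a connected graph. -/
def KConnected (k : ℕ) (G : SimpleGraph V) : Prop :=
  k < Nat.card V ∧ ∀ S : Set V, S.Finite → S.ncard < k → (G.induce Sᶜ).Connected

/-- An `(s₁t₁,s₂t₂)`-linkage: an `s₁t₁`-path and an `s₂t₂`-path that are disjoint. -/
def Linkage (G : SimpleGraph V) (s₁ t₁ s₂ t₂ : V) : Prop :=
  ∃ (P : G.Walk s₁ t₁) (Q : G.Walk s₂ t₂),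
    P.IsPath ∧ Q.IsPath ∧ P.support.Disjoint Q.support

/-- `G` is obtained from its induced subgraph on `S` by attaching, to each triangle,
a (possibly empty) clique: `t x` records the triangle of the clique containing `x ∉ S`. -/
def CliqueExpansion (G : SimpleGraph V) (S : Set V) (t : V → Finset V) : Prop :=
  ∀ x ∉ S, ↑(t x) ⊆ S ∧ (t x).card = 3 ∧
    (∀ y ∈ t x, ∀ z ∈ t x, y ≠ z → G.Adj y z) ∧
    (∀ y, G.Adj x y ↔ (y ∈ t x ∨ (y ∉ S ∧ y ≠ x ∧ t y = t x)))

/-- `H` is a planar graph with outerface cycle `(p,q,r,s)`, every internal face a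
triangle, and every triangle a face.  (Combinatorial surrogate: `p,q,r,s` bound a
common face — witnessed by planarity of the graph with an apex added adjacent to
them — the edge count of a near-triangulation of a quadrilateral, and no
separating triangle.) -/
def IsQuadTriangulation {U : Type*} (H : SimpleGraph U) (p q r s : U) : Prop :=
  p ≠ q ∧ p ≠ r ∧ p ≠ s ∧ q ≠ r ∧ q ≠ s ∧ r ≠ s ∧
  H.Adj p q ∧ H.Adj q r ∧ H.Adj r s ∧ H.Adj s p ∧
  IsPlanar H ∧ IsPlanar (Apex H {p, q, r, s}) ∧
  H.edgeSet.ncard + 7 = 3 * Nat.card U ∧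
  ∀ T : Finset U, T.card = 3 → (∀ x ∈ T, ∀ y ∈ T, x ≠ y → H.Adj x y) →
    (((↑T)ᶜ : Set U) = ∅ ∨ (H.induce (↑T)ᶜ).Connected)

/-- `W` is an `(a,b,c,d)`-web. -/
def IsWeb (W : SimpleGraph V) (a b c d : V) : Prop :=
  ∃ (S : Set V) (ha : a ∈ S) (hb : b ∈ S) (hc : c ∈ S) (hd : d ∈ S),
    IsQuadTriangulation (W.induce S) ⟨a, ha⟩ ⟨b, hb⟩ ⟨c, hc⟩ ⟨d, hd⟩ ∧
    ∃ t, CliqueExpansion W S t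

/-- `W` is an `{a,b,c,d}`-web, i.e. an `(a',b',c',d')`-web for some ordering. -/
def IsUnorderedWeb (W : SimpleGraph V) (a b c d : V) : Prop :=
  ∃ p q r s : V, ({p, q, r, s} : Set V) = {a, b, c, d} ∧ IsWeb W p q r s

/-- A separation `(A, B)` of `G` (given by the vertex sets of the two sides). -/
def IsSeparation (G : SimpleGraph V) (A B : Set V) : Prop :=
  A ∪ B = Set.univ ∧
  (∀ ⦃x y⦄, G.Adj x y → (x ∈ A ∧ y ∈ A) ∨ (x ∈ B ∧ y ∈ B)) ∧
  (A \ B).Nonempty ∧ (B \ A).Nonempty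

theorem Set.encard_le_encard_of_pairwiseDisjoint {α ι : Type*} {s : Set ι} {B : ι → Set α}
    {S : Set α} (hB : s.PairwiseDisjoint B) (hS : ∀ i ∈ s, (S ∩ B i).Nonempty) :
    s.encard ≤ S.encard := by
  rcases s.eq_empty_or_nonempty with rfl | ⟨i, hi⟩
  · simp
  have : Nonempty α := ⟨(hS i hi).some⟩
  choose! f hfS hfB using hS
  refine Set.encard_le_encard_of_injOn hfS fun i hi j hj hij => ?_
  by_contra hne
  exact Set.disjoint_left.mp (hB hi hj hne) (hfB i hi) (hij ▸ hfB j hj)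

namespace SimpleGraph

/-- Branch sets of a rooted complete minor, without the requirement that they be connected. -/
structure IsRootedTouchingFamily {ι : Type*} (G : SimpleGraph V) (r : ι → V) (B : ι → Set V) :
    Prop where
  root_mem : ∀ i, r i ∈ B i
  pairwise_disjoint : Pairwise fun i j => Disjoint (B i) (B j)
  pairwise_adj : Pairwise fun i j => ∃ x ∈ B i, ∃ y ∈ B j, G.Adj x y

theorem RootedK4MinorOn.isRootedTouchingFamily {G : SimpleGraph V} {a b c d : V}
    {A B C D : Set V} (h : RootedK4MinorOn G a b c d A B C D) :
    G.IsRootedTouchingFamily ![a, b, c, d] ![A, B, C, D] := by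
  obtain ⟨ha, hb, hc, hd, -, -, -, -, hAB, hAC, hAD, hBC, hBD, hCD,
    eAB, eAC, eAD, eBC, eBD, eCD⟩ := h
  have adj_symm : ∀ {X Y : Set V}, (∃ x ∈ X, ∃ y ∈ Y, G.Adj x y) →
      ∃ y ∈ Y, ∃ x ∈ X, G.Adj y x := fun ⟨x, hx, y, hy, e⟩ => ⟨y, hy, x, hx, e.symm⟩
  refine ⟨fun i => by fin_cases i <;> assumption, fun i j hij => ?_, fun i j hij => ?_⟩ <;>
    fin_cases i <;> fin_cases j <;> simp only [ne_eq, not_true_eq_false] at hij <;>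
    simp only [Fin.zero_eta, Fin.mk_one, Fin.reduceFinMk, Matrix.cons_val] <;>
    first | assumption | exact Disjoint.symm ‹_› | exact adj_symm ‹_›

section TouchingFamily

variable {ι : Type*} {G : SimpleGraph V} {r : ι → V} {B : ι → Set V}

theorem IsRootedTouchingFamily.exists_disjoint_of_encard_lt (hF : G.IsRootedTouchingFamily r B)
    {H : Set V} (hH : H.encard < ENat.card ι) : ∃ i, Disjoint H (B i) := by
  by_contra! hmeet
  refine hH.not_ge ?_
  rw [← Set.encard_univ]
  exact Set.encard_le_encard_of_pairwiseDisjoint (hF.pairwise_disjoint.set_pairwise _)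
    fun i _ => Set.not_disjoint_iff_nonempty_inter.mp (hmeet i)

theorem IsRootedTouchingFamily.eq_root_of_mem (hF : G.IsRootedTouchingFamily r B) {H : Set V}
    (hcover : ∀ v ∉ H, v ∈ Set.range r) {i : ι} (hi : Disjoint H (B i)) {x : V}
    (hx : x ∈ B i) : x = r i := by
  obtain ⟨j, rfl⟩ := hcover x (Set.disjoint_right.mp hi hx)
  obtain rfl | hne := eq_or_ne j i
  · rfl
  · exact (Set.disjoint_left.mp (hF.pairwise_disjoint hne) (hF.root_mem j) hx).elim

theorem IsRootedTouchingFamily.encard_le_of_subset_singleton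
    (hF : G.IsRootedTouchingFamily r B) {i : ι} (hi : B i ⊆ {r i}) :
    ENat.card ι ≤ (G.neighborSet (r i)).encard + 1 := by
  rw [← Set.encard_univ, ← Set.encard_sdiff_singleton_add_one (Set.mem_univ i)]
  gcongr
  refine Set.encard_le_encard_of_pairwiseDisjoint (hF.pairwise_disjoint.set_pairwise _)
    fun j hj => ?_
  obtain ⟨x, hx, y, hy, hxy⟩ := hF.pairwise_adj (Ne.symm hj.2)
  exact ⟨y, (hi hx : x = r i) ▸ hxy, hy⟩

theorem not_isRootedTouchingFamily {H : Set V} (hH : H.encard < ENat.card ι)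
    (hcover : ∀ v ∉ H, v ∈ Set.range r)
    (hdeg : ∀ i, (G.neighborSet (r i)).encard + 1 < ENat.card ι) :
    ¬ G.IsRootedTouchingFamily r B := by
  intro hF
  obtain ⟨i, hi⟩ := hF.exists_disjoint_of_encard_lt hH
  exact (hdeg i).not_ge <|
    hF.encard_le_of_subset_singleton fun x hx => hF.eq_root_of_mem hcover hi hx

end TouchingFamily

end SimpleGraph

/-- a triangle `uvw = 0,1,2` with `a,b = 3,4` adjacent to `u,v` and
`c,d = 5,6` adjacent to `v,w` has no `K₄`-minor rooted at `a,b,c,d`. -/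
theorem triangle_plus_four_no_rooted_K4_minor :
    ¬ RootedK4Minor
        (fromEdgeSet {s(0, 1), s(1, 2), s(0, 2), s(3, 0), s(3, 1), s(4, 0), s(4, 1),
            s(5, 1), s(5, 2), s(6, 1), s(6, 2)} : SimpleGraph (Fin 7))
        3 4 5 6 := by
  set G : SimpleGraph (Fin 7) := fromEdgeSet {s(0, 1), s(1, 2), s(0, 2), s(3, 0), s(3, 1),
    s(4, 0), s(4, 1), s(5, 1), s(5, 2), s(6, 1), s(6, 2)}
  have hN : G.neighborSet 3 = {0, 1} ∧ G.neighborSet 4 = {0, 1} ∧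
      G.neighborSet 5 = {1, 2} ∧ G.neighborSet 6 = {1, 2} := by
    refine ⟨?_, ?_, ?_, ?_⟩ <;> ext y <;> fin_cases y <;> simp [G]
  rintro ⟨A, B, C, D, h⟩
  refine not_isRootedTouchingFamily (H := {0, 1, 2}) ?_ ?_ ?_ h.isRootedTouchingFamily
  · simp [Set.encard_insert_of_notMem]; norm_num
  · intro v hv
    fin_cases v <;> simp_all
  · intro i
    fin_cases i <;> simp [hN, Set.encard_pair] <;> norm_num
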